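/- arXiv:math/0703794 — 3 statements merged into one kernel-verified Lean document; each statement's English description precedes it below -/
import Mathlib

section
/- Let H ∈ (1/2, 1), t > 0 and g(s) = (s+1)^(H-1/2) - s^(H-1/2). Then lim_{h → 0⁺} ∫₀^{t/h} (1 - hs/t)^(1-2H) g(s)² ds = ∫₀^∞ g(s)² ds, and this limit is finite. -/
/-!
With `R = t / h → ∞` the weight is `(1 - s / R) ^ (1 - 2H)`. Split `(0, R]` at `R / 2`. On
`(0, R / 2]` the weight stays in a compact range and tends to `1` pointwise, so dominated
convergence gives `∫₀^∞ g²`. On `(R / 2, R]` Bernoulli's inequality gives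
`g(s)² ≤ C R ^ (2H - 3)`, while the integrable singularity of the weight at `s = R` contributes
only a factor `O(R)`; this piece is `O(R ^ (2H - 2)) → 0`.
-/

open Filter MeasureTheory
open Set Real Asymptotics Topology

section RpowIncrement

variable {a s : ℝ}

lemma rpow_add_one_sub_rpow_nonneg (ha : 0 ≤ a) (hs : 0 ≤ s) : 0 ≤ (s + 1) ^ a - s ^ a :=
  sub_nonneg.2 (rpow_le_rpow hs (by linarith) ha)

/-- Bernoulli's inequality `(1 + 1/s) ^ a ≤ 1 + a / s`, multiplied by `s ^ a`. -/
lemma rpow_add_one_sub_rpow_le (ha : 0 ≤ a) (ha1 : a ≤ 1) (hs : 0 < s) :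
    (s + 1) ^ a - s ^ a ≤ a * s ^ (a - 1) := by
  have hfactor : (s + 1) ^ a = s ^ a * (1 + s⁻¹) ^ a := by
    rw [← mul_rpow hs.le (by positivity), mul_add, mul_one, mul_inv_cancel₀ hs.ne']
  have hbernoulli : (1 + s⁻¹) ^ a ≤ 1 + a * s⁻¹ :=
    rpow_one_add_le_one_add_mul_self (by linarith [inv_pos.2 hs]) ha ha1
  calc (s + 1) ^ a - s ^ a ≤ s ^ a * (1 + a * s⁻¹) - s ^ a := by
        rw [hfactor]; gcongr
    _ = a * (s ^ a * s⁻¹) := by ring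
    _ = a * s ^ (a - 1) := by rw [rpow_sub_one hs.ne', div_eq_mul_inv]

lemma isBigO_sq_rpow_add_one_sub_rpow (ha : 0 ≤ a) (ha1 : a ≤ 1) :
    (fun s : ℝ => ((s + 1) ^ a - s ^ a) ^ 2) =O[atTop] (· ^ (2 * a - 2)) := by
  refine IsBigO.of_bound (a ^ 2) ?_
  filter_upwards [eventually_gt_atTop 0] with s hs
  have hle := rpow_add_one_sub_rpow_le ha ha1 hs
  have hnonneg := rpow_add_one_sub_rpow_nonneg ha hs.le
  rw [norm_of_nonneg (by positivity), norm_of_nonneg (by positivity)]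
  calc ((s + 1) ^ a - s ^ a) ^ 2 ≤ (a * s ^ (a - 1)) ^ 2 := by gcongr
    _ = a ^ 2 * s ^ (2 * a - 2) := by
      rw [mul_pow, ← rpow_mul_natCast hs.le]; congr 2; push_cast; ring

lemma integrableOn_sq_rpow_add_one_sub_rpow (ha : 0 ≤ a) (ha' : a < 1 / 2) :
    IntegrableOn (fun s : ℝ => ((s + 1) ^ a - s ^ a) ^ 2) (Ioi 0) := by
  have hcont : Continuous (fun s : ℝ => ((s + 1) ^ a - s ^ a) ^ 2) := by
    fun_prop (disch := exact ha)
  refine ((hcont.locallyIntegrable.locallyIntegrableOn (Ici 0)).integrableOn_of_isBigO_atTop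
    (isBigO_sq_rpow_add_one_sub_rpow ha (by linarith)) ?_).mono_set Ioi_subset_Ici_self
  exact integrableAtFilter_rpow_atTop_iff.2 (by linarith)

end RpowIncrement

section Weight

variable {p R : ℝ}

lemma intervalIntegrable_one_sub_div_rpow (hp : -1 < p) (hR : R ≠ 0) (a b : ℝ) :
    IntervalIntegrable (fun s => (1 - s / R) ^ p) volume a b := by
  have h := ((intervalIntegral.intervalIntegrable_rpow' hp (a := 1 - a / R)
    (b := 1 - b / R)).comp_sub_left 1).comp_mul_left (c := R⁻¹)
  simpa [div_eq_inv_mul, hR] using h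

lemma integral_half_one_sub_div_rpow (hR : R ≠ 0) :
    ∫ s in R / 2..R, (1 - s / R) ^ p = R * ∫ x in (1 / 2 : ℝ)..1, (1 - x) ^ p := by
  rw [intervalIntegral.integral_comp_div (fun x => (1 - x) ^ p) hR, smul_eq_mul]
  congr 2 <;> field_simp

lemma one_sub_div_mem_Icc_half (hR : 0 < R) {s : ℝ} (hs : s ∈ Icc 0 (R / 2)) :
    1 - s / R ∈ Icc (1 / 2) 1 := by
  have h0 : 0 ≤ s / R := div_nonneg hs.1 hR.le
  have h1 : s / R ≤ 1 / 2 := by rw [div_le_iff₀ hR]; linarith [hs.2]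
  constructor <;> linarith

lemma exists_bound_rpow_on_Icc_half (p : ℝ) :
    ∃ M, ∀ x ∈ Icc (1 / 2 : ℝ) 1, ‖x ^ p‖ ≤ M :=
  isCompact_Icc.exists_bound_of_continuousOn fun x hx =>
    (continuousAt_rpow_const x p (Or.inl (by linarith [hx.1]))).continuousWithinAt

end Weight

section WeightedTruncation

variable {f : ℝ → ℝ} {p q : ℝ}

theorem tendsto_setIntegral_Ioc_half_one_sub_div_rpow_mul (hf : IntegrableOn f (Ioi 0)) :
    Tendsto (fun R => ∫ s in Ioc 0 (R / 2), (1 - s / R) ^ p * f s) atTop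
      (𝓝 (∫ s in Ioi 0, f s)) := by
  obtain ⟨M, hM⟩ := exists_bound_rpow_on_Icc_half p
  have hM0 : 0 ≤ M := (norm_nonneg _).trans (hM 1 ⟨by norm_num, le_rfl⟩)
  have hrestrict : ∀ R, ∫ s in Ioc 0 (R / 2), (1 - s / R) ^ p * f s
      = ∫ s in Ioi 0, (Iic (R / 2)).indicator (fun s => (1 - s / R) ^ p * f s) s := fun R => by
    rw [setIntegral_indicator measurableSet_Iic, Ioi_inter_Iic]
  simp_rw [hrestrict]
  refine tendsto_integral_filter_of_dominated_convergence (fun s => M * ‖f s‖)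
    (Eventually.of_forall fun R => ?_) ?_ (hf.norm.const_mul M) (ae_of_all _ fun s => ?_)
  · exact ((Measurable.aestronglyMeasurable (by fun_prop)).mul hf.aestronglyMeasurable).indicator
      measurableSet_Iic
  · filter_upwards [eventually_gt_atTop 0] with R hR
    filter_upwards [ae_restrict_mem measurableSet_Ioi] with s hs
    by_cases hsR : s ∈ Iic (R / 2)
    · rw [indicator_of_mem hsR, norm_mul]
      gcongr
      exact hM _ (one_sub_div_mem_Icc_half hR ⟨le_of_lt hs, hsR⟩)
    · rw [indicator_of_notMem hsR, norm_zero]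
      positivity
  · have hweight : Tendsto (fun R => (1 - s / R) ^ p * f s) atTop (𝓝 (f s)) := by
      have hbase : Tendsto (fun R => 1 - s / R) atTop (𝓝 1) := by
        simpa using tendsto_const_nhds.sub (tendsto_const_nhds.div_atTop (tendsto_id (α := ℝ)))
      simpa using (hbase.rpow_const (p := p) (Or.inl one_ne_zero)).mul_const (f s)
    refine hweight.congr' ?_
    filter_upwards [eventually_ge_atTop (2 * s)] with R hR
    rw [indicator_of_mem (show s ∈ Iic (R / 2) from mem_Iic.2 (by linarith))]

lemma exists_norm_le_on_Ioc_half_of_isBigO (hq : q ≤ 0) (hf : f =O[atTop] (· ^ q)) :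
    ∃ C, ∀ᶠ R in atTop, ∀ s ∈ Ioc (R / 2) R, ‖f s‖ ≤ C * (R / 2) ^ q := by
  obtain ⟨C, hC, hCf⟩ := hf.exists_pos
  obtain ⟨s₀, hs₀⟩ := eventually_atTop.1 hCf.bound
  refine ⟨C, ?_⟩
  filter_upwards [eventually_ge_atTop (2 * max s₀ 1)] with R hR s hs
  have hR2 : 0 < R / 2 := by linarith [le_max_right s₀ 1]
  calc ‖f s‖ ≤ C * ‖s ^ q‖ := hs₀ s (by linarith [le_max_left s₀ 1, hs.1])
    _ = C * s ^ q := by rw [norm_of_nonneg (rpow_nonneg (by linarith [hs.1]) _)]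
    _ ≤ C * (R / 2) ^ q := mul_le_mul_of_nonneg_left (rpow_le_rpow_of_nonpos hR2 hs.1.le hq) hC.le

theorem tendsto_setIntegral_Ioc_half_self_one_sub_div_rpow_mul (hp : -1 < p) (hq : q < -1)
    (hf : f =O[atTop] (· ^ q)) :
    Tendsto (fun R => ∫ s in Ioc (R / 2) R, (1 - s / R) ^ p * f s) atTop (𝓝 0) := by
  obtain ⟨C, hC⟩ := exists_norm_le_on_Ioc_half_of_isBigO (by linarith) hf
  set K := ∫ x in (1 / 2 : ℝ)..1, (1 - x) ^ p
  have hbound : Tendsto (fun R : ℝ => 2 * C * K * (R / 2) ^ (q + 1)) atTop (𝓝 0) := by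
    have h := ((tendsto_rpow_neg_atTop (by linarith : 0 < -(q + 1))).comp
      (tendsto_id.atTop_div_const (two_pos : (0 : ℝ) < 2))).const_mul (2 * C * K)
    simp only [neg_neg, mul_zero] at h
    exact h
  refine squeeze_zero_norm' ?_ hbound
  filter_upwards [hC, eventually_gt_atTop 0] with R hCR hR
  calc ‖∫ s in Ioc (R / 2) R, (1 - s / R) ^ p * f s‖
      ≤ ∫ s in Ioc (R / 2) R, C * (R / 2) ^ q * (1 - s / R) ^ p := by
        refine norm_integral_le_of_norm_le
          ((intervalIntegrable_one_sub_div_rpow hp hR.ne' _ _).1.const_mul _) ?_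
        filter_upwards [ae_restrict_mem measurableSet_Ioc] with s hs
        have hw : 0 ≤ (1 - s / R) ^ p :=
          rpow_nonneg (by rw [sub_nonneg, div_le_one hR]; exact hs.2) _
        rw [norm_mul, norm_of_nonneg hw, mul_comm]
        exact mul_le_mul_of_nonneg_right (hCR s hs) hw
    _ = C * (R / 2) ^ q * (R * K) := by
        rw [integral_const_mul, ← intervalIntegral.integral_of_le (by linarith),
          integral_half_one_sub_div_rpow hR.ne']
    _ = 2 * C * K * (R / 2) ^ (q + 1) := by
        rw [rpow_add_one (by positivity)]
        ring

theorem tendsto_setIntegral_Ioc_one_sub_div_rpow_mul (hp : -1 < p) (hq : q < -1)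
    (hf : IntegrableOn f (Ioi 0)) (hf_decay : f =O[atTop] (· ^ q)) :
    Tendsto (fun R => ∫ s in Ioc 0 R, (1 - s / R) ^ p * f s) atTop
      (𝓝 (∫ s in Ioi 0, f s)) := by
  have hsum := (tendsto_setIntegral_Ioc_half_one_sub_div_rpow_mul hf (p := p)).add
    (tendsto_setIntegral_Ioc_half_self_one_sub_div_rpow_mul hp hq hf_decay)
  rw [add_zero] at hsum
  refine hsum.congr' ?_
  obtain ⟨M, hM⟩ := exists_bound_rpow_on_Icc_half p
  obtain ⟨C, hC⟩ := exists_norm_le_on_Ioc_half_of_isBigO (by linarith) hf_decay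
  filter_upwards [hC, eventually_gt_atTop 0] with R hCR hR
  have hnear : IntegrableOn (fun s => (1 - s / R) ^ p * f s) (Ioc 0 (R / 2)) := by
    refine (hf.mono_set Ioc_subset_Ioi_self).bdd_mul (c := M)
      (Measurable.aestronglyMeasurable (by fun_prop)) ?_
    filter_upwards [ae_restrict_mem measurableSet_Ioc] with s hs
    exact hM _ (one_sub_div_mem_Icc_half hR (Ioc_subset_Icc_self hs))
  have hfar : IntegrableOn (fun s => (1 - s / R) ^ p * f s) (Ioc (R / 2) R) := by
    refine (intervalIntegrable_one_sub_div_rpow hp hR.ne' _ _).1.mul_bdd (c := C * (R / 2) ^ q)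
      (hf.mono_set fun s hs => lt_trans (by positivity) hs.1).aestronglyMeasurable ?_
    filter_upwards [ae_restrict_mem measurableSet_Ioc] with s hs
    exact hCR s hs
  rw [← setIntegral_union (Ioc_disjoint_Ioc_of_le le_rfl) measurableSet_Ioc hnear hfar,
    Ioc_union_Ioc_eq_Ioc (by positivity) (by linarith)]

end WeightedTruncation

/-- `∫₀^{t/h} (1 - hs/t)^(1-2H) g(s)² ds → ∫₀^∞ g(s)² ds` as `h → 0⁺`,
and the limit is finite (i.e. `g²` is integrable on `(0,∞)`). -/
theorem stmt3 (H t : ℝ) (hH : 1/2 < H ∧ H < 1) (ht : 0 < t) :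
    Tendsto
      (fun h : ℝ => ∫ s in Set.Ioc (0:ℝ) (t / h),
        (1 - h * s / t) ^ (1 - 2 * H) * ((s + 1) ^ (H - 1/2) - s ^ (H - 1/2)) ^ 2)
      (nhdsWithin 0 (Set.Ioi 0))
      (nhds (∫ s in Set.Ioi (0:ℝ), ((s + 1) ^ (H - 1/2) - s ^ (H - 1/2)) ^ 2)) ∧
    IntegrableOn (fun s : ℝ => ((s + 1) ^ (H - 1/2) - s ^ (H - 1/2)) ^ 2)
      (Set.Ioi 0) := by
  obtain ⟨hH1, hH2⟩ := hH
  have hint := integrableOn_sq_rpow_add_one_sub_rpow (a := H - 1 / 2) (by linarith) (by linarith)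
  refine ⟨?_, hint⟩
  have hdecay := isBigO_sq_rpow_add_one_sub_rpow (a := H - 1 / 2) (by linarith) (by linarith)
  have hR : Tendsto (fun h : ℝ => t / h) (𝓝[>] 0) atTop := by
    simpa only [div_eq_mul_inv] using tendsto_inv_nhdsGT_zero.const_mul_atTop ht
  have hlim := (tendsto_setIntegral_Ioc_one_sub_div_rpow_mul (p := 1 - 2 * H) (by linarith)
    (by linarith) hint hdecay).comp hR
  have hweight (h s : ℝ) : s / (t / h) = h * s / t := by rw [div_div_eq_mul_div, mul_comm s h]
  simpa only [Function.comp_def, hweight] using hlim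
end

section
/- Let H ∈ (1/2, 1), g(s) = (s+1)^(H-1/2) - s^(H-1/2) and r(x) = x ∫₀^∞ g(x²u) g(u) du for x > 0. If r is constant on (0, ∞), then by Cauchy–Schwarz equality in L², g(2u) = g(u) for all u ≥ 0, which is false; hence r is not constant on (0, ∞). -/
/-!
With `g s = (s + 1) ^ (H - 1/2) - s ^ (H - 1/2)`, the values `r 1 = ‖g‖²` and
`r √2 = √2 ⟪g (2 ·), g⟫` are the two sides of a Cauchy–Schwarz inequality in `L²(0, ∞)`, since
`‖g (2 ·)‖² = ‖g‖² / 2`. Expanding, `‖√2 g (2 ·) - g‖² = 2 (r 1 - r √2)`, and the left side is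
positive because the continuous integrand equals `(√2 - 1)² ≠ 0` at `0` (where `g 0 = 1`).
So `r √2 < r 1`.
-/

open MeasureTheory Set Filter Real

noncomputable def powDiff (a s : ℝ) : ℝ := (s + 1) ^ a - s ^ a

section powDiff

variable {a : ℝ}

lemma continuous_powDiff (ha : 0 ≤ a) : Continuous (powDiff a) := by
  unfold powDiff
  fun_prop (disch := exact ha)

lemma powDiff_zero (ha : 0 < a) : powDiff a 0 = 1 := by
  simp [powDiff, zero_rpow ha.ne']

lemma powDiff_nonneg (ha : 0 ≤ a) {s : ℝ} (hs : 0 ≤ s) : 0 ≤ powDiff a s :=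
  sub_nonneg.2 (rpow_le_rpow hs (by linarith) ha)

-- Bernoulli's inequality `(1 + 1/s)^a ≤ 1 + a/s` for `a ∈ [0, 1]`.
lemma powDiff_le (ha₀ : 0 ≤ a) (ha₁ : a ≤ 1) {s : ℝ} (hs : 0 < s) :
    powDiff a s ≤ a * s ^ (a - 1) := by
  have hbern : (1 + s⁻¹) ^ a ≤ 1 + a * s⁻¹ :=
    rpow_one_add_le_one_add_mul_self (by linarith [inv_pos.2 hs]) ha₀ ha₁
  calc powDiff a s = s ^ a * ((1 + s⁻¹) ^ a - 1) := by
        rw [powDiff, show s + 1 = s * (1 + s⁻¹) by field_simp, mul_rpow hs.le (by positivity)]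
        ring
    _ ≤ s ^ a * (a * s⁻¹) := by gcongr; linarith
    _ = a * s ^ (a - 1) := by rw [rpow_sub_one hs.ne']; ring

lemma integrableOn_powDiff_sq (ha₀ : 0 < a) (ha₁ : a < 1 / 2) :
    IntegrableOn (fun s => powDiff a s ^ 2) (Ioi 0) := by
  have hcont : Continuous (fun s => powDiff a s ^ 2) := (continuous_powDiff ha₀.le).pow 2
  have htail : IntegrableOn (fun s => powDiff a s ^ 2) (Ioi 1) := by
    have hdom := (integrableOn_Ioi_rpow_of_lt (a := 2 * a - 2) (by linarith) one_pos).const_mul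
      (a ^ 2)
    refine hdom.mono' hcont.aestronglyMeasurable.restrict ?_
    filter_upwards [ae_restrict_mem measurableSet_Ioi] with s hs
    have hs₀ : 0 < s := one_pos.trans hs
    calc ‖powDiff a s ^ 2‖ = powDiff a s ^ 2 := by rw [norm_pow, Real.norm_eq_abs, sq_abs]
      _ ≤ (a * s ^ (a - 1)) ^ 2 := by
          gcongr
          · exact powDiff_nonneg ha₀.le hs₀.le
          · exact powDiff_le ha₀.le (by linarith) hs₀
      _ = a ^ 2 * s ^ (2 * a - 2) := by
          rw [mul_pow, ← rpow_mul_natCast hs₀.le]; ring_nf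
  rw [← Ioc_union_Ioi_eq_Ioi zero_le_one]
  exact (hcont.integrableOn_Icc.mono_set Ioc_subset_Icc_self).union htail

end powDiff

lemma IntegrableOn.comp_mul_left_Ioi {E : Type*} [NormedAddCommGroup E] {f : ℝ → E}
    (hf : IntegrableOn f (Ioi 0)) {b : ℝ} (hb : 0 < b) :
    IntegrableOn (fun x => f (b * x)) (Ioi 0) := by
  rw [← integrable_indicator_iff measurableSet_Ioi] at hf ⊢
  refine (hf.comp_mul_left' hb.ne').congr (Eventually.of_forall fun x => ?_)
  simp only [indicator_apply, mem_Ioi, mul_pos_iff_of_pos_left hb]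

lemma setIntegral_Ioi_pos_of_continuous {f : ℝ → ℝ} (hf : Continuous f) (hnn : 0 ≤ f)
    (hint : IntegrableOn f (Ioi 0)) (h0 : f 0 ≠ 0) : 0 < ∫ x in Ioi 0, f x := by
  rw [setIntegral_pos_iff_support_of_nonneg_ae (Eventually.of_forall hnn) hint]
  have hne : (Function.support f ∩ Ioi 0).Nonempty :=
    nonempty_of_mem (inter_mem (nhdsWithin_le_nhds (hf.isOpen_support.mem_nhds h0))
      self_mem_nhdsWithin)
  exact (hf.isOpen_support.inter isOpen_Ioi).measure_pos volume hne

lemma sqrt_two_mul_integral_comp_two_mul_mul_lt {f : ℝ → ℝ} (hf : Continuous f)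
    (hsq : IntegrableOn (fun u => f u ^ 2) (Ioi 0)) (h0 : f 0 ≠ 0) :
    √2 * ∫ u in Ioi 0, f (2 * u) * f u < ∫ u in Ioi 0, f u ^ 2 := by
  have hsq₂ : IntegrableOn (fun u => f (2 * u) ^ 2) (Ioi 0) :=
    IntegrableOn.comp_mul_left_Ioi hsq two_pos
  have hmemLp : MemLp f 2 (volume.restrict (Ioi 0)) :=
    (memLp_two_iff_integrable_sq hf.aestronglyMeasurable).2 hsq
  have hmemLp₂ : MemLp (fun u => f (2 * u)) 2 (volume.restrict (Ioi 0)) :=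
    (memLp_two_iff_integrable_sq (by fun_prop)).2 hsq₂
  have hprod : IntegrableOn (fun u => f (2 * u) * f u) (Ioi 0) := hmemLp₂.integrable_mul hmemLp
  have hscale : ∫ u in Ioi 0, f (2 * u) ^ 2 = (∫ u in Ioi 0, f u ^ 2) / 2 := by
    rw [integral_comp_mul_left_Ioi (fun v => f v ^ 2) 0 two_pos, mul_zero, smul_eq_mul]
    ring
  have hexpand : ∀ u, (√2 * f (2 * u) - f u) ^ 2
      = 2 * f (2 * u) ^ 2 - 2 * √2 * (f (2 * u) * f u) + f u ^ 2 := fun u => by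
    ring_nf; rw [sq_sqrt zero_le_two]; ring
  have hint : IntegrableOn (fun u => (√2 * f (2 * u) - f u) ^ 2) (Ioi 0) := by
    simp only [hexpand]
    exact ((hsq₂.const_mul 2).sub (hprod.const_mul _)).add hsq
  have hpos : 0 < ∫ u in Ioi 0, (√2 * f (2 * u) - f u) ^ 2 := by
    refine setIntegral_Ioi_pos_of_continuous (by fun_prop) (fun u => sq_nonneg _) hint ?_
    have : √2 - 1 ≠ 0 := sub_ne_zero.2 (by norm_num)
    simpa [← sub_one_mul] using mul_ne_zero this h0
  have hvalue : ∫ u in Ioi 0, (√2 * f (2 * u) - f u) ^ 2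
      = 2 * (∫ u in Ioi 0, f u ^ 2) - 2 * √2 * ∫ u in Ioi 0, f (2 * u) * f u := by
    simp only [hexpand]
    rw [integral_add (f := fun u => 2 * f (2 * u) ^ 2 - 2 * √2 * (f (2 * u) * f u))
        ((hsq₂.const_mul 2).sub (hprod.const_mul _)) hsq,
      integral_sub (hsq₂.const_mul 2) (hprod.const_mul _), integral_const_mul, integral_const_mul,
      hscale]
    ring
  linarith

/-- The function `r(x) = x ∫₀^∞ g(x²u) g(u) du` is not constant on `(0,∞)`,
where `g(s) = (s+1)^(H-1/2) - s^(H-1/2)`. -/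
theorem stmt6 (H : ℝ) (hH : 1/2 < H ∧ H < 1) :
    ¬ ∃ c : ℝ, ∀ x : ℝ, 0 < x →
      x * ∫ u in Set.Ioi (0:ℝ),
        ((x ^ 2 * u + 1) ^ (H - 1/2) - (x ^ 2 * u) ^ (H - 1/2))
          * ((u + 1) ^ (H - 1/2) - u ^ (H - 1/2)) = c := by
  rintro ⟨c, hc⟩
  have ha₀ : 0 < H - 1 / 2 := by linarith
  have ha₁ : H - 1 / 2 < 1 / 2 := by linarith
  have hr₁ : ∫ u in Ioi 0, powDiff (H - 1 / 2) u ^ 2 = c := by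
    simpa [powDiff, sq] using hc 1 one_pos
  have hr₂ : √2 * ∫ u in Ioi 0, powDiff (H - 1 / 2) (2 * u) * powDiff (H - 1 / 2) u = c := by
    simpa [powDiff, sq_sqrt zero_le_two] using hc √2 (by positivity)
  have hlt := sqrt_two_mul_integral_comp_two_mul_mul_lt (continuous_powDiff ha₀.le)
    (integrableOn_powDiff_sq ha₀ ha₁) (by rw [powDiff_zero ha₀]; exact one_ne_zero)
  linarith
end

section
/- Let H ∈ (1/2, 1), t > 0, and define g(s) = (s+1)^{H-1/2} - s^{H-1/2}, c = c_H/(H - 1/2) for some constant c_H > 0, and V(h) = h^{-2α} c_H² ∫₀^t s^{1-2H} (∫_t^{t+h} (u-s)^{H-3/2} u^{H-1/2} du)² ds for α ∈ (0, H). Then V(h) → 0 as h → 0⁺. More precisely, V(h) satisfies the two-sided bound c² h^{2(H-α)} I(h) ≤ V(h) ≤ c² (1 + h/t)^{2H-1} h^{2(H-α)} I(h) where I(h) = ∫₀^{t/h} (1 - hs/t)^{1-2H} g(s)² ds. -/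
/-!
Let `K(s) = ∫_t^{t+h} (u-s)^{H-3/2} du = ((t+h-s)^{H-1/2} - (t-s)^{H-1/2}) / (H-1/2)`.
Since `u ↦ u^{H-1/2}` is increasing, the inner integral of `V` lies between `t^{H-1/2} K(s)` and
`(t+h)^{H-1/2} K(s)`, and the substitution `s = t - h x` turns `∫₀^t s^{1-2H} K(s)² ds` into
`h^{2H} t^{1-2H} (H-1/2)⁻² I(h)`; this is the two-sided bound.

For the limit, concavity in the form `(r+h)^a - r^a ≤ h (r+h)^{a-1}` gives
`K(s) ≤ h (t+h-s)^{H-3/2} / (H-1/2)`. One of `s`, `t+h-s` is at least `t/2`, so the weight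
`s^{1-2H} (t+h-s)^{2H-3}` is at most `(t/2)^{2H-3} s^{1-2H} + (t/2)^{1-2H} (t+h-s)^{2H-3}`, and
integrating gives `∫₀^t s^{1-2H} K(s)² ds ≤ P h² + Q h^{2H}`. Hence
`V(h) = O(h^{2-2α} + h^{2H-2α}) → 0`.
-/

open Filter Set MeasureTheory Topology

lemma rpow_add_sub_rpow_le {r h a : ℝ} (hr : 0 ≤ r) (hh : 0 < h) (ha : a ≤ 1) :
    (r + h) ^ a - r ^ a ≤ h * (r + h) ^ (a - 1) := by
  have hrh : 0 < r + h := by linarith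
  have hr_le : r * (r + h) ^ (a - 1) ≤ r ^ a := by
    rcases hr.eq_or_lt with rfl | hr
    · simpa using Real.rpow_nonneg le_rfl a
    · calc r * (r + h) ^ (a - 1) ≤ r * r ^ (a - 1) :=
            mul_le_mul_of_nonneg_left
              (Real.rpow_le_rpow_of_nonpos hr (by linarith) (by linarith)) hr.le
        _ = r ^ a := by rw [Real.rpow_sub_one hr.ne']; field_simp
  have hsplit : (r + h) ^ a = (r + h) * (r + h) ^ (a - 1) := by
    rw [Real.rpow_sub_one hrh.ne']; field_simp
  rw [hsplit]
  linarith

lemma rpow_mul_rpow_le_of_two_mul_le_add {x y m p q : ℝ} (hx : 0 < x) (hy : 0 < y)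
    (hm : 0 < m) (hxy : 2 * m ≤ x + y) (hp : p ≤ 0) (hq : q ≤ 0) :
    x ^ p * y ^ q ≤ m ^ q * x ^ p + m ^ p * y ^ q := by
  have hxp := Real.rpow_nonneg hx.le p
  have hyq := Real.rpow_nonneg hy.le q
  have hmp := Real.rpow_nonneg hm.le p
  have hmq := Real.rpow_nonneg hm.le q
  rcases le_total m y with hmy | hym
  · have := Real.rpow_le_rpow_of_nonpos hm hmy hq
    nlinarith
  · have := Real.rpow_le_rpow_of_nonpos hm (by linarith : m ≤ x) hp
    nlinarith

lemma integral_mul_monotoneOn_bounds {f w : ℝ → ℝ} {a b : ℝ} (hab : a ≤ b)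
    (hf : IntervalIntegrable f volume a b) (hf0 : ∀ x ∈ Icc a b, 0 ≤ f x)
    (hw : ContinuousOn w (Icc a b)) (hmono : MonotoneOn w (Icc a b)) :
    w a * ∫ x in a..b, f x ≤ ∫ x in a..b, f x * w x ∧
      ∫ x in a..b, f x * w x ≤ w b * ∫ x in a..b, f x := by
  have hfw : IntervalIntegrable (fun x => f x * w x) volume a b :=
    hf.mul_continuousOn (by rwa [uIcc_of_le hab])
  have ha : a ∈ Icc a b := left_mem_Icc.2 hab
  have hb : b ∈ Icc a b := right_mem_Icc.2 hab
  rw [← intervalIntegral.integral_const_mul, ← intervalIntegral.integral_const_mul]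
  constructor
  · refine intervalIntegral.integral_mono_on hab (hf.const_mul _) hfw fun x hx => ?_
    rw [mul_comm]
    exact mul_le_mul_of_nonneg_left (hmono ha hx hx.1) (hf0 x hx)
  · refine intervalIntegral.integral_mono_on hab hfw (hf.const_mul _) fun x hx => ?_
    rw [mul_comm (w b)]
    exact mul_le_mul_of_nonneg_left (hmono hx hb hx.2) (hf0 x hx)

lemma rpow_sub_half_sq {c : ℝ} (hc : 0 ≤ c) (H : ℝ) :
    (c ^ (H - 1/2)) ^ 2 = c ^ (2*H - 1) := by
  rw [← Real.rpow_mul_natCast hc]; ring_nf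

lemma MeasureTheory.StronglyMeasurable.intervalIntegral_prod_right {f : ℝ × ℝ → ℝ}
    (hf : StronglyMeasurable f) (a b : ℝ) :
    StronglyMeasurable fun s => ∫ u in a..b, f (s, u) :=
  (hf.integral_prod_right' (ν := volume.restrict (Ioc a b))).sub
    (hf.integral_prod_right' (ν := volume.restrict (Ioc b a)))

lemma integral_add_sub_rpow_le {t h p : ℝ} (ht : 0 ≤ t) (hh : 0 < h) (hp : p < -1) :
    ∫ s in (0:ℝ)..t, (t + h - s) ^ p ≤ -(h ^ (p + 1) / (p + 1)) := by
  have h0 : (0:ℝ) ∉ uIcc h (t + h) := by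
    rw [uIcc_of_le (by linarith)]; exact fun h0 => by linarith [h0.1]
  rw [intervalIntegral.integral_comp_sub_left (fun x => x ^ p), sub_zero,
    show t + h - t = h by ring, integral_rpow (Or.inr ⟨by linarith, h0⟩), sub_div]
  have : (t + h) ^ (p + 1) / (p + 1) ≤ 0 :=
    div_nonpos_of_nonneg_of_nonpos (Real.rpow_nonneg (by linarith) _) (by linarith)
  linarith

noncomputable def incrementKernel (H t h s : ℝ) : ℝ :=
  ((t + h - s) ^ (H - 1/2) - (t - s) ^ (H - 1/2)) / (H - 1/2)

noncomputable def incrementEnergy (H t h : ℝ) : ℝ :=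
  ∫ s in (0:ℝ)..t, s ^ (1 - 2*H) *
    (∫ u in t..(t + h), (u - s) ^ (H - 3/2) * u ^ (H - 1/2)) ^ 2

noncomputable def rescaledIntegral (H t h : ℝ) : ℝ :=
  ∫ x in (0:ℝ)..(t / h), (1 - h * x / t) ^ (1 - 2*H) * ((x + 1) ^ (H - 1/2) - x ^ (H - 1/2)) ^ 2

section

variable {H t h : ℝ}

lemma integral_sub_rpow_eq_incrementKernel (hH : 1/2 < H) (s : ℝ) :
    ∫ u in t..(t + h), (u - s) ^ (H - 3/2) = incrementKernel H t h s := by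
  rw [intervalIntegral.integral_comp_sub_right (fun u => u ^ (H - 3/2)) s,
    integral_rpow (Or.inl (by linarith)), show H - 3/2 + 1 = H - 1/2 by ring]
  rfl

lemma incrementKernel_nonneg (hH : 1/2 < H) (hh : 0 ≤ h) {s : ℝ} (hs : s ≤ t) :
    0 ≤ incrementKernel H t h s := by
  refine div_nonneg (sub_nonneg.2 ?_) (by linarith)
  exact Real.rpow_le_rpow (by linarith) (by linarith) (by linarith)

lemma incrementKernel_le (hH : 1/2 < H) (hH' : H ≤ 3/2) (hh : 0 < h) {s : ℝ} (hs : s ≤ t) :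
    incrementKernel H t h s ≤ h * (t + h - s) ^ (H - 3/2) / (H - 1/2) := by
  have key := rpow_add_sub_rpow_le (r := t - s) (a := H - 1/2) (by linarith) hh (by linarith)
  rw [show t - s + h = t + h - s by ring, show H - 1/2 - 1 = H - 3/2 by ring] at key
  exact div_le_div_of_nonneg_right key (by linarith)

lemma continuous_incrementKernel (hH : 1/2 < H) : Continuous (incrementKernel H t h) := by
  unfold incrementKernel
  have hp : 0 ≤ H - 1/2 := by linarith
  fun_prop (disch := exact Or.inr hp)

lemma incrementKernel_sub_mul (hh : 0 < h) {x : ℝ} (hx : 0 ≤ x) :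
    incrementKernel H t h (t - h * x) =
      h ^ (H - 1/2) * ((x + 1) ^ (H - 1/2) - x ^ (H - 1/2)) / (H - 1/2) := by
  rw [incrementKernel, show t + h - (t - h * x) = h * (x + 1) by ring,
    show t - (t - h * x) = h * x by ring, Real.mul_rpow hh.le (by linarith),
    Real.mul_rpow hh.le hx, mul_sub]

lemma integral_sub_rpow_mul_rpow_bounds (hH : 1/2 < H) (ht : 0 < t) (hh : 0 < h)
    {s : ℝ} (hs : s ≤ t) :
    t ^ (H - 1/2) * incrementKernel H t h s ≤
        ∫ u in t..(t + h), (u - s) ^ (H - 3/2) * u ^ (H - 1/2) ∧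
      ∫ u in t..(t + h), (u - s) ^ (H - 3/2) * u ^ (H - 1/2) ≤
        (t + h) ^ (H - 1/2) * incrementKernel H t h s := by
  rw [← integral_sub_rpow_eq_incrementKernel hH s]
  refine integral_mul_monotoneOn_bounds (f := fun u => (u - s) ^ (H - 3/2))
    (w := fun u => u ^ (H - 1/2)) (by linarith) ?_ ?_ ?_ ?_
  · simpa using (intervalIntegral.intervalIntegrable_rpow' (a := t - s) (b := t + h - s)
      (by linarith : -1 < H - 3/2)).comp_sub_right s
  · exact fun u hu => Real.rpow_nonneg (by linarith [hu.1]) _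
  · exact (Real.continuous_rpow_const (by linarith)).continuousOn
  · exact fun u hu v _ huv => Real.rpow_le_rpow (by linarith [hu.1]) huv (by linarith)

lemma incrementEnergy_bounds (hH : 1/2 < H) (hH1 : H < 1) (ht : 0 < t) (hh : 0 < h) :
    t ^ (2*H - 1) * (∫ s in (0:ℝ)..t, s ^ (1 - 2*H) * incrementKernel H t h s ^ 2) ≤
        incrementEnergy H t h ∧
      incrementEnergy H t h ≤
        (t + h) ^ (2*H - 1) * ∫ s in (0:ℝ)..t, s ^ (1 - 2*H) * incrementKernel H t h s ^ 2 := by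
  unfold incrementEnergy
  set J : ℝ → ℝ := fun s => ∫ u in t..(t + h), (u - s) ^ (H - 3/2) * u ^ (H - 1/2)
  set A : ℝ → ℝ := fun s => s ^ (1 - 2*H) * incrementKernel H t h s ^ 2
  have hpt : ∀ s ∈ Icc 0 t, t ^ (2*H - 1) * A s ≤ s ^ (1 - 2*H) * J s ^ 2 ∧
      s ^ (1 - 2*H) * J s ^ 2 ≤ (t + h) ^ (2*H - 1) * A s := by
    intro s hs
    obtain ⟨hlo, hhi⟩ := integral_sub_rpow_mul_rpow_bounds hH ht hh hs.2
    have hlo0 := mul_nonneg (Real.rpow_nonneg ht.le (H - 1/2))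
      (incrementKernel_nonneg hH hh.le hs.2)
    have hw := Real.rpow_nonneg hs.1 (1 - 2*H)
    rw [← rpow_sub_half_sq ht.le, ← rpow_sub_half_sq (by linarith : 0 ≤ t + h), mul_left_comm,
      mul_left_comm _ (s ^ _), ← mul_pow, ← mul_pow]
    exact ⟨mul_le_mul_of_nonneg_left (pow_le_pow_left₀ hlo0 hlo 2) hw,
      mul_le_mul_of_nonneg_left (pow_le_pow_left₀ (hlo0.trans hlo) hhi 2) hw⟩
  have hA : IntervalIntegrable A volume 0 t :=
    (intervalIntegral.intervalIntegrable_rpow' (by linarith)).mul_continuousOn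
      ((continuous_incrementKernel hH).pow 2).continuousOn
  have hJ : StronglyMeasurable J :=
    StronglyMeasurable.intervalIntegral_prod_right (f := fun p : ℝ × ℝ =>
      (p.2 - p.1) ^ (H - 3/2) * p.2 ^ (H - 1/2)) (by fun_prop) t (t + h)
  have hB : IntervalIntegrable (fun s => s ^ (1 - 2*H) * J s ^ 2) volume 0 t := by
    rw [intervalIntegrable_iff_integrableOn_Ioc_of_le ht.le]
    refine ((intervalIntegrable_iff_integrableOn_Ioc_of_le ht.le).1
      (hA.const_mul ((t + h) ^ (2*H - 1)))).mono'
      (by fun_prop) ?_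
    filter_upwards [ae_restrict_mem measurableSet_Ioc] with s hs
    have hpos := mul_nonneg (Real.rpow_nonneg hs.1.le (1 - 2*H)) (sq_nonneg (J s))
    rw [Real.norm_of_nonneg hpos]
    exact (hpt s (Ioc_subset_Icc_self hs)).2
  rw [← intervalIntegral.integral_const_mul, ← intervalIntegral.integral_const_mul]
  exact ⟨intervalIntegral.integral_mono_on ht.le (hA.const_mul _) hB fun s hs => (hpt s hs).1,
    intervalIntegral.integral_mono_on ht.le hB (hA.const_mul _) fun s hs => (hpt s hs).2⟩

lemma integral_rpow_mul_incrementKernel_sq_eq (ht : 0 < t) (hh : 0 < h) :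
    ∫ s in (0:ℝ)..t, s ^ (1 - 2*H) * incrementKernel H t h s ^ 2 =
      h ^ (2*H) / (t ^ (2*H - 1) * (H - 1/2) ^ 2) * rescaledIntegral H t h := by
  set f : ℝ → ℝ := fun s => s ^ (1 - 2*H) * incrementKernel H t h s ^ 2
  have hsub : ∫ s in (0:ℝ)..t, f s = h * ∫ x in (0:ℝ)..(t / h), f (t - h * x) := by
    rw [intervalIntegral.integral_comp_sub_mul f hh.ne', smul_eq_mul, mul_zero, sub_zero,
      mul_div_cancel₀ t hh.ne', sub_self, mul_inv_cancel_left₀ hh.ne']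
  have hpt : ∀ x ∈ uIcc 0 (t / h), f (t - h * x) =
      h ^ (2*H - 1) / (t ^ (2*H - 1) * (H - 1/2) ^ 2) *
        ((1 - h * x / t) ^ (1 - 2*H) * ((x + 1) ^ (H - 1/2) - x ^ (H - 1/2)) ^ 2) := by
    intro x hx
    rw [uIcc_of_le (by positivity)] at hx
    have hhx : 0 ≤ 1 - h * x / t := by
      rw [sub_nonneg, div_le_one ht, ← le_div_iff₀' hh]; exact hx.2
    have hweight : (t - h * x) ^ (1 - 2*H) = (1 - h * x / t) ^ (1 - 2*H) / t ^ (2*H - 1) := by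
      rw [show t - h * x = t * (1 - h * x / t) by field_simp, Real.mul_rpow ht.le hhx,
        show 1 - 2*H = -(2*H - 1) by ring, Real.rpow_neg ht.le]
      ring
    simp only [f]
    rw [hweight, incrementKernel_sub_mul hh hx.1, div_pow, mul_pow, rpow_sub_half_sq hh.le]
    field_simp
  have hpow : h * h ^ (2*H - 1) = h ^ (2*H) := by
    rw [mul_comm, ← Real.rpow_add_one hh.ne']; ring_nf
  rw [rescaledIntegral, hsub, intervalIntegral.integral_congr hpt,
    intervalIntegral.integral_const_mul, ← mul_assoc, mul_div_assoc', hpow]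

lemma rpow_mul_incrementKernel_sq_le (hH : 1/2 < H) (hH' : H ≤ 3/2) (ht : 0 < t) (hh : 0 < h)
    {s : ℝ} (hs : s ∈ Ioo 0 t) :
    s ^ (1 - 2*H) * incrementKernel H t h s ^ 2 ≤ h ^ 2 / (H - 1/2) ^ 2 *
      ((t / 2) ^ (2*H - 3) * s ^ (1 - 2*H) + (t / 2) ^ (1 - 2*H) * (t + h - s) ^ (2*H - 3)) := by
  have hK := incrementKernel_le hH hH' hh hs.2.le
  have hK0 := incrementKernel_nonneg hH hh.le hs.2.le
  have hsq : (h * (t + h - s) ^ (H - 3/2) / (H - 1/2)) ^ 2 =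
      h ^ 2 / (H - 1/2) ^ 2 * (t + h - s) ^ (2*H - 3) := by
    rw [div_pow, mul_pow, ← Real.rpow_mul_natCast (by linarith [hs.2])]
    ring_nf
  have hsplit := rpow_mul_rpow_le_of_two_mul_le_add hs.1 (by linarith [hs.2] : 0 < t + h - s)
    (by linarith : 0 < t / 2) (by linarith) (by linarith : 1 - 2*H ≤ 0)
    (by linarith : 2*H - 3 ≤ 0)
  calc s ^ (1 - 2*H) * incrementKernel H t h s ^ 2
      ≤ s ^ (1 - 2*H) * (h * (t + h - s) ^ (H - 3/2) / (H - 1/2)) ^ 2 :=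
        mul_le_mul_of_nonneg_left (pow_le_pow_left₀ hK0 hK 2) (Real.rpow_nonneg hs.1.le _)
    _ = h ^ 2 / (H - 1/2) ^ 2 * (s ^ (1 - 2*H) * (t + h - s) ^ (2*H - 3)) := by
        rw [hsq]; ring
    _ ≤ _ := mul_le_mul_of_nonneg_left hsplit (by positivity)

lemma exists_integral_rpow_mul_incrementKernel_sq_le (hH : 1/2 < H) (hH1 : H < 1)
    (ht : 0 < t) :
    ∃ P Q : ℝ, ∀ h : ℝ, 0 < h →
      ∫ s in (0:ℝ)..t, s ^ (1 - 2*H) * incrementKernel H t h s ^ 2 ≤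
        P * h ^ 2 + Q * h ^ (2*H) := by
  refine ⟨(t / 2) ^ (2*H - 3) * (t ^ (2 - 2*H) / (2 - 2*H)) / (H - 1/2) ^ 2,
    (t / 2) ^ (1 - 2*H) / (2 - 2*H) / (H - 1/2) ^ 2, fun h hh => ?_⟩
  have hint : IntervalIntegrable (fun s => (t + h - s) ^ (2*H - 3)) volume 0 t := by
    refine ContinuousOn.intervalIntegrable fun s hs => ?_
    rw [uIcc_of_le ht.le] at hs
    have hpos : 0 < t + h - s := by linarith [hs.2]
    exact ((continuousAt_const.sub continuousAt_id).rpow_const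
      (Or.inl hpos.ne')).continuousWithinAt
  have hpow : -1 < 1 - 2*H := by linarith
  have hmono := intervalIntegral.integral_mono_on_of_le_Ioo ht.le
    ((intervalIntegral.intervalIntegrable_rpow' hpow).mul_continuousOn
      ((continuous_incrementKernel hH).pow 2).continuousOn)
    ((((intervalIntegral.intervalIntegrable_rpow' hpow).const_mul _).add
      (hint.const_mul _)).const_mul _)
    fun s hs => rpow_mul_incrementKernel_sq_le hH (by linarith) ht hh hs
  rw [intervalIntegral.integral_const_mul, intervalIntegral.integral_add
      ((intervalIntegral.intervalIntegrable_rpow' hpow).const_mul _) (hint.const_mul _),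
    intervalIntegral.integral_const_mul, intervalIntegral.integral_const_mul,
    integral_rpow (Or.inl hpow), Real.zero_rpow (by linarith), sub_zero,
    show 1 - 2*H + 1 = 2 - 2*H by ring] at hmono
  have htail := integral_add_sub_rpow_le ht.le hh (by linarith : 2*H - 3 < -1)
  rw [show 2*H - 3 + 1 = 2*H - 2 by ring, ← div_neg, neg_sub] at htail
  have hpow2 : h ^ 2 * h ^ (2*H - 2) = h ^ (2*H) := by
    rw [← Real.rpow_natCast, ← Real.rpow_add hh]; ring_nf
  refine hmono.trans ?_
  calc _ ≤ h ^ 2 / (H - 1/2) ^ 2 * ((t / 2) ^ (2*H - 3) * (t ^ (2 - 2*H) / (2 - 2*H)) +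
        (t / 2) ^ (1 - 2*H) * (h ^ (2*H - 2) / (2 - 2*H))) := by gcongr
    _ = _ := by rw [← hpow2]; ring

lemma incrementEnergy_bounds_rescaledIntegral (hH : 1/2 < H) (hH1 : H < 1) (ht : 0 < t)
    (hh : 0 < h) :
    h ^ (2*H) * rescaledIntegral H t h / (H - 1/2) ^ 2 ≤ incrementEnergy H t h ∧
      incrementEnergy H t h ≤
        (1 + h / t) ^ (2*H - 1) * (h ^ (2*H) * rescaledIntegral H t h / (H - 1/2) ^ 2) := by
  obtain ⟨hlo, hhi⟩ := incrementEnergy_bounds hH hH1 ht hh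
  rw [integral_rpow_mul_incrementKernel_sq_eq ht hh] at hlo hhi
  have hratio : (1 + h / t) ^ (2*H - 1) = (t + h) ^ (2*H - 1) / t ^ (2*H - 1) := by
    rw [← Real.div_rpow (by linarith) ht.le, add_div, div_self ht.ne']
  refine ⟨le_of_eq_of_le ?_ hlo, hhi.trans_eq ?_⟩
  · field_simp
  · rw [hratio]; field_simp

lemma exists_incrementEnergy_le (hH : 1/2 < H) (hH1 : H < 1) (ht : 0 < t) :
    ∃ P Q : ℝ, ∀ h : ℝ, 0 < h →
      incrementEnergy H t h ≤ (t + h) ^ (2*H - 1) * (P * h ^ 2 + Q * h ^ (2*H)) := by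
  obtain ⟨P, Q, hPQ⟩ := exists_integral_rpow_mul_incrementKernel_sq_le hH hH1 ht
  refine ⟨P, Q, fun h hh => ?_⟩
  exact (incrementEnergy_bounds hH hH1 ht hh).2.trans
    (mul_le_mul_of_nonneg_left (hPQ h hh) (Real.rpow_nonneg (by linarith) _))

lemma tendsto_rpow_mul_incrementEnergy (hH : 1/2 < H) (hH1 : H < 1) (ht : 0 < t)
    {α : ℝ} (hα : α < H) (c : ℝ) :
    Tendsto (fun h => h ^ (-(2*α)) * c ^ 2 * incrementEnergy H t h) (𝓝[>] 0) (𝓝 0) := by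
  obtain ⟨P, Q, hPQ⟩ := exists_incrementEnergy_le hH hH1 ht
  set U : ℝ → ℝ := fun h =>
    c ^ 2 * (t + h) ^ (2*H - 1) * (P * h ^ (2 - 2*α) + Q * h ^ (2*H - 2*α))
  have hU : Continuous U := by
    have hpow : ∀ p : ℝ, 0 ≤ p → Continuous fun h : ℝ => h ^ p :=
      fun p hp => Real.continuous_rpow_const hp
    exact (continuous_const.mul ((continuous_const.add continuous_id).rpow_const
      fun _ => Or.inr (by linarith))).mul ((continuous_const.mul (hpow _ (by linarith))).add
        (continuous_const.mul (hpow _ (by linarith))))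
  have hU0 : U 0 = 0 := by
    simp only [U, Real.zero_rpow (by linarith : 2 - 2*α ≠ 0),
      Real.zero_rpow (by linarith : 2*H - 2*α ≠ 0)]
    ring
  refine tendsto_of_tendsto_of_tendsto_of_le_of_le' tendsto_const_nhds
    (hU0 ▸ (hU.tendsto 0).mono_left nhdsWithin_le_nhds) ?_ ?_
  all_goals refine eventually_nhdsWithin_of_forall fun h (hh : 0 < h) => ?_
  · exact mul_nonneg (by positivity) (intervalIntegral.integral_nonneg ht.le
      fun s hs => mul_nonneg (Real.rpow_nonneg hs.1 _) (sq_nonneg _))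
  · calc _ ≤ h ^ (-(2*α)) * c ^ 2 * ((t + h) ^ (2*H - 1) * (P * h ^ 2 + Q * h ^ (2*H))) :=
          mul_le_mul_of_nonneg_left (hPQ h hh) (by positivity)
      _ = U h := by
          simp only [U, sub_eq_add_neg (b := 2*α), Real.rpow_add hh, ← Real.rpow_two]
          ring

end

theorem stmt14_general (H t α c_H : ℝ) (hH : 1/2 < H ∧ H < 1) (ht : 0 < t)
    (hα : 0 < α ∧ α < H)
    (g V I : ℝ → ℝ)
    (hg : ∀ s : ℝ, g s = (s + 1) ^ (H - 1/2) - s ^ (H - 1/2))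
    (hV : ∀ h : ℝ, 0 < h → V h = h ^ (-(2*α)) * c_H ^ 2 *
      ∫ s in (0:ℝ)..t, s ^ (1 - 2*H) *
        (∫ u in t..(t + h), (u - s) ^ (H - 3/2) * u ^ (H - 1/2)) ^ 2)
    (hI : ∀ h : ℝ, 0 < h → I h = ∫ s in (0:ℝ)..(t / h), (1 - h * s / t) ^ (1 - 2*H) * (g s) ^ 2) :
    (∀ h : ℝ, 0 < h →
      (c_H / (H - 1/2)) ^ 2 * h ^ (2 * (H - α)) * I h ≤ V h ∧
      V h ≤ (c_H / (H - 1/2)) ^ 2 * (1 + h / t) ^ (2*H - 1) * h ^ (2 * (H - α)) * I h) ∧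
    Tendsto V (nhdsWithin 0 (Set.Ioi 0)) (nhds 0) := by
  obtain ⟨hH, hH1⟩ := hH
  refine ⟨fun h hh => ?_, ?_⟩
  · have hscale : ∀ X, h ^ (-(2*α)) * c_H ^ 2 * (h ^ (2*H) * X / (H - 1/2) ^ 2) =
        (c_H / (H - 1/2)) ^ 2 * h ^ (2 * (H - α)) * X := fun X => by
      rw [show 2 * (H - α) = -(2*α) + 2*H by ring, Real.rpow_add hh, div_pow]; ring
    have hIh : I h = rescaledIntegral H t h := by simp only [hI h hh, hg, rescaledIntegral]
    obtain ⟨hlo, hhi⟩ := incrementEnergy_bounds_rescaledIntegral hH hH1 ht hh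
    rw [← hIh] at hlo hhi
    have hfac : 0 ≤ h ^ (-(2*α)) * c_H ^ 2 := by positivity
    rw [hV h hh, ← hscale]
    refine ⟨mul_le_mul_of_nonneg_left hlo hfac,
      (mul_le_mul_of_nonneg_left hhi hfac).trans_eq ?_⟩
    rw [mul_left_comm, hscale]; ring
  refine (tendsto_rpow_mul_incrementEnergy hH hH1 ht hα.2 c_H).congr' ?_
  exact eventually_nhdsWithin_of_forall fun h hh => (hV h hh).symm

/-- Two-sided bound and convergence to `0` of
`V(h) = h^{-2α} c_H² ∫₀^t s^{1-2H} (∫_t^{t+h} (u-s)^{H-3/2} u^{H-1/2} du)² ds`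
for `α ∈ (0, H)`, with `I(h) = ∫₀^{t/h} (1 - hs/t)^{1-2H} g(s)² ds` and
`c = c_H/(H-1/2)`. -/
theorem stmt14 (H t α c_H : ℝ) (hH : 1/2 < H ∧ H < 1) (ht : 0 < t)
    (hα : 0 < α ∧ α < H) (hc : 0 < c_H)
    (g V I : ℝ → ℝ)
    (hg : ∀ s : ℝ, g s = (s + 1) ^ (H - 1/2) - s ^ (H - 1/2))
    (hV : ∀ h : ℝ, 0 < h → V h = h ^ (-(2*α)) * c_H ^ 2 *
      ∫ s in (0:ℝ)..t, s ^ (1 - 2*H) *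
        (∫ u in t..(t + h), (u - s) ^ (H - 3/2) * u ^ (H - 1/2)) ^ 2)
    (hI : ∀ h : ℝ, 0 < h → I h = ∫ s in (0:ℝ)..(t / h), (1 - h * s / t) ^ (1 - 2*H) * (g s) ^ 2) :
    (∀ h : ℝ, 0 < h →
      (c_H / (H - 1/2)) ^ 2 * h ^ (2 * (H - α)) * I h ≤ V h ∧
      V h ≤ (c_H / (H - 1/2)) ^ 2 * (1 + h / t) ^ (2*H - 1) * h ^ (2 * (H - α)) * I h) ∧
    Tendsto V (nhdsWithin 0 (Set.Ioi 0)) (nhds 0) :=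
  stmt14_general H t α c_H hH ht hα g V I hg hV hI
end
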